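/- Let U ⊆ ℂ be open, let φ, ς : ℂ → ℂ be complex differentiable (holomorphic) on U, and set ψ := ς′. Define W(x, y) := Re((x − iy)·φ(x + iy) + ς(x + iy)) and the stresses σ_{xx} := ∂²W/∂y², σ_{xy} := −∂²W/∂x∂y, σ_{yy} := ∂²W/∂x². Then for every z = x + iy ∈ U, the second Kolosov–Muskhelishvili formula holds: σ_{yy} − σ_{xx} + 2i σ_{xy} = 2(z̄ φ″(z) + ψ′(z)). -/

import Mathlib

/-!
Write `z = x + iy` and `F = z̄ φ(z) + ς(z)`, so that `W = Re F`. Along a horizontal line `F` is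
the restriction of the holomorphic function `a ↦ (a - iy) φ(a + iy) + ς(a + iy)`, and along a
vertical line that of `b ↦ (x - ib) φ(x + ib) + ς(x + ib)`; hence every partial derivative of `W`
is the real part of a complex derivative. Moreover each first partial of `F` has the same shape
`z̄ f(z) + g(z)` again: `F_x = z̄ φ' + (φ + ς')` and `F_y = i (z̄ φ' + (ς' - φ))`. Differentiating
once more gives `F_xx - F_yy = 2 (z̄ φ'' + ς'')` and `F_xy = i (z̄ φ'' + ς'')`, whose real parts are
`σ_yy - σ_xx` and `-σ_xy`.
-/

open Complex Filter Topology

section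

/-- `goursatPotential φ ς x y = z̄ φ(z) + ς(z)` for real `x, y` and `z = x + iy`; the two
coordinates are allowed to be complex so that each one-variable slice is holomorphic. -/
def goursatPotential (φ ς : ℂ → ℂ) (a b : ℂ) : ℂ :=
  (a - b * I) * φ (a + b * I) + ς (a + b * I)

variable {φ ς : ℂ → ℂ}

theorem hasDerivAt_goursatPotential_fst {a b φ' ς' : ℂ} (hφ : HasDerivAt φ φ' (a + b * I))
    (hς : HasDerivAt ς ς' (a + b * I)) :
    HasDerivAt (goursatPotential φ ς · b) ((a - b * I) * φ' + (φ (a + b * I) + ς')) a := by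
  have hz : HasDerivAt (· + b * I) 1 a := (hasDerivAt_id a).add_const _
  have h := (((hasDerivAt_id a).sub_const (b * I)).mul (hφ.comp a hz)).add (hς.comp a hz)
  exact h.congr_deriv (by simp only [id, Function.comp_apply]; ring)

theorem hasDerivAt_goursatPotential_snd {a b φ' ς' : ℂ} (hφ : HasDerivAt φ φ' (a + b * I))
    (hς : HasDerivAt ς ς' (a + b * I)) :
    HasDerivAt (goursatPotential φ ς a ·) (I * ((a - b * I) * φ' + (ς' - φ (a + b * I)))) b := by
  have hz : HasDerivAt (a + · * I) I b := by
    simpa using ((hasDerivAt_id b).mul_const I).const_add a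
  have h := (((hasDerivAt_id b).mul_const I).const_sub a |>.mul (hφ.comp b hz)).add (hς.comp b hz)
  exact h.congr_deriv (by simp only [id, Function.comp_apply]; ring)

variable {U : Set ℂ} {x y : ℝ}

theorem deriv_re_goursatPotential_fst (hφ : DifferentiableAt ℂ φ (x + y * I))
    (hς : DifferentiableAt ℂ ς (x + y * I)) :
    deriv (fun x' : ℝ => (goursatPotential φ ς x' y).re) x =
      (goursatPotential (deriv φ) (φ + deriv ς) x y).re :=
  (hasDerivAt_goursatPotential_fst hφ.hasDerivAt hς.hasDerivAt).real_of_complex.deriv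

theorem deriv_re_goursatPotential_snd (hφ : DifferentiableAt ℂ φ (x + y * I))
    (hς : DifferentiableAt ℂ ς (x + y * I)) :
    deriv (fun y' : ℝ => (goursatPotential φ ς x y').re) y =
      (I * goursatPotential (deriv φ) (deriv ς - φ) x y).re :=
  (hasDerivAt_goursatPotential_snd hφ.hasDerivAt hς.hasDerivAt).real_of_complex.deriv

theorem deriv_deriv_re_goursatPotential_fst (hU : IsOpen U) (hφ : DifferentiableOn ℂ φ U)
    (hς : DifferentiableOn ℂ ς U) (hz : (x : ℂ) + y * I ∈ U) :
    deriv (deriv fun x' : ℝ => (goursatPotential φ ς x' y).re) x =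
      ((x - y * I) * deriv (deriv φ) (x + y * I) +
        (deriv φ (x + y * I) + (deriv φ (x + y * I) + deriv (deriv ς) (x + y * I)))).re := by
  have hline : ∀ᶠ x' : ℝ in 𝓝 x, (x' : ℂ) + y * I ∈ U :=
    (hU.preimage (by fun_prop)).mem_nhds hz
  have hd : deriv (fun x' : ℝ => (goursatPotential φ ς x' y).re) =ᶠ[𝓝 x]
      fun x' => (goursatPotential (deriv φ) (φ + deriv ς) x' y).re := by
    filter_upwards [hline] with x' hx'
    exact deriv_re_goursatPotential_fst (hφ.differentiableAt (hU.mem_nhds hx'))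
      (hς.differentiableAt (hU.mem_nhds hx'))
  have hφ' := ((hφ.deriv hU).differentiableAt (hU.mem_nhds hz)).hasDerivAt
  have hς' := ((hς.deriv hU).differentiableAt (hU.mem_nhds hz)).hasDerivAt
  rw [hd.deriv_eq]
  exact (hasDerivAt_goursatPotential_fst hφ'
    ((hφ.differentiableAt (hU.mem_nhds hz)).hasDerivAt.add hς')).real_of_complex.deriv

theorem deriv_deriv_re_goursatPotential_snd (hU : IsOpen U) (hφ : DifferentiableOn ℂ φ U)
    (hς : DifferentiableOn ℂ ς U) (hz : (x : ℂ) + y * I ∈ U) :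
    deriv (deriv fun y' : ℝ => (goursatPotential φ ς x y').re) y =
      (I * (I * ((x - y * I) * deriv (deriv φ) (x + y * I) +
        (deriv (deriv ς) (x + y * I) - deriv φ (x + y * I) - deriv φ (x + y * I))))).re := by
  have hline : ∀ᶠ y' : ℝ in 𝓝 y, (x : ℂ) + y' * I ∈ U :=
    (hU.preimage (by fun_prop)).mem_nhds hz
  have hd : deriv (fun y' : ℝ => (goursatPotential φ ς x y').re) =ᶠ[𝓝 y]
      fun y' => (I * goursatPotential (deriv φ) (deriv ς - φ) x y').re := by
    filter_upwards [hline] with y' hy'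
    exact deriv_re_goursatPotential_snd (hφ.differentiableAt (hU.mem_nhds hy'))
      (hς.differentiableAt (hU.mem_nhds hy'))
  have hφ' := ((hφ.deriv hU).differentiableAt (hU.mem_nhds hz)).hasDerivAt
  have hς' := ((hς.deriv hU).differentiableAt (hU.mem_nhds hz)).hasDerivAt
  rw [hd.deriv_eq]
  exact ((hasDerivAt_goursatPotential_snd hφ'
    (hς'.sub (hφ.differentiableAt (hU.mem_nhds hz)).hasDerivAt)).const_mul I).real_of_complex.deriv

theorem deriv_deriv_re_goursatPotential_snd_fst (hU : IsOpen U) (hφ : DifferentiableOn ℂ φ U)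
    (hς : DifferentiableOn ℂ ς U) (hz : (x : ℂ) + y * I ∈ U) :
    deriv (fun x' : ℝ => deriv (fun y' : ℝ => (goursatPotential φ ς x' y').re) y) x =
      (I * ((x - y * I) * deriv (deriv φ) (x + y * I) +
        (deriv φ (x + y * I) + (deriv (deriv ς) (x + y * I) - deriv φ (x + y * I))))).re := by
  have hline : ∀ᶠ x' : ℝ in 𝓝 x, (x' : ℂ) + y * I ∈ U :=
    (hU.preimage (by fun_prop)).mem_nhds hz
  have hd : (fun x' : ℝ => deriv (fun y' : ℝ => (goursatPotential φ ς x' y').re) y) =ᶠ[𝓝 x]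
      fun x' => (I * goursatPotential (deriv φ) (deriv ς - φ) x' y).re := by
    filter_upwards [hline] with x' hx'
    exact deriv_re_goursatPotential_snd (hφ.differentiableAt (hU.mem_nhds hx'))
      (hς.differentiableAt (hU.mem_nhds hx'))
  have hφ' := ((hφ.deriv hU).differentiableAt (hU.mem_nhds hz)).hasDerivAt
  have hς' := ((hς.deriv hU).differentiableAt (hU.mem_nhds hz)).hasDerivAt
  rw [hd.deriv_eq]
  exact ((hasDerivAt_goursatPotential_fst hφ'
    (hς'.sub (hφ.differentiableAt (hU.mem_nhds hz)).hasDerivAt)).const_mul I).real_of_complex.deriv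

end

/-- second Kolosov–Muskhelishvili formula: for φ, ς holomorphic on an
open set U ⊆ ℂ, ψ := ς′, and the Airy stress function
W(x,y) = Re((x − iy) φ(x+iy) + ς(x+iy)) with σ_xx = W_yy, σ_xy = −W_xy, σ_yy = W_xx,
one has σ_yy − σ_xx + 2i σ_xy = 2 (z̄ φ″(z) + ψ′(z)) for z = x + iy ∈ U. -/
theorem stmt16 (U : Set ℂ) (hU : IsOpen U) (φ ς : ℂ → ℂ)
    (hφ : DifferentiableOn ℂ φ U) (hς : DifferentiableOn ℂ ς U) :
    let W : ℝ → ℝ → ℝ := fun x y =>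
      (((x : ℂ) - (y : ℂ) * Complex.I) * φ ((x : ℂ) + (y : ℂ) * Complex.I) +
        ς ((x : ℂ) + (y : ℂ) * Complex.I)).re
    let ψ : ℂ → ℂ := deriv ς
    ∀ x y : ℝ, (x : ℂ) + (y : ℂ) * Complex.I ∈ U →
      let σxx : ℝ := deriv (deriv (fun y' : ℝ => W x y')) y
      let σxy : ℝ := -deriv (fun x' : ℝ => deriv (fun y' : ℝ => W x' y') y) x
      let σyy : ℝ := deriv (deriv (fun x' : ℝ => W x' y)) x
      ((σyy : ℂ) - (σxx : ℂ) + 2 * Complex.I * (σxy : ℂ))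
        = 2 * ((starRingEnd ℂ) ((x : ℂ) + (y : ℂ) * Complex.I) *
              deriv (deriv φ) ((x : ℂ) + (y : ℂ) * Complex.I) +
            deriv ψ ((x : ℂ) + (y : ℂ) * Complex.I)) := by
  intro W ψ x y hz σxx σxy σyy
  have hσyy : σyy = _ := deriv_deriv_re_goursatPotential_fst hU hφ hς hz
  have hσxx : σxx = _ := deriv_deriv_re_goursatPotential_snd hU hφ hς hz
  have hσxy : σxy = -_ := congrArg Neg.neg (deriv_deriv_re_goursatPotential_snd_fst hU hφ hς hz)
  have hconj : (starRingEnd ℂ) ((x : ℂ) + y * I) = x - y * I := by simp [sub_eq_add_neg]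
  rw [hσyy, hσxx, hσxy, hconj]
  generalize (x : ℂ) - y * I = c
  generalize deriv φ (x + y * I) = p
  generalize deriv (deriv φ) (x + y * I) = p₂
  generalize deriv ψ (x + y * I) = s₂
  apply Complex.ext <;> simp
  ring
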